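/- arXiv:2404.16455 — 3 statements merged into one kernel-verified Lean document; each statement's English description precedes it below -/
import Mathlib

section
/- Let V be a finite set of atoms, C a consistency predicate, φ a Boolean formula over V, and L a set of Boolean formulas over V (the "T-lemmas") such that: (i) every C-consistent assignment satisfies every formula in L (T-validity), and (ii) no assignment in ITTA(φ) satisfies all formulas in L (L rules out ITTA(φ)). Then the set of assignments satisfying φ and all formulas in L is exactly CTTA(φ). -/
theorem stmt5_general {V : Type} (C : (V → Bool) → Prop)
    (φ : Set (V → Bool)) (L : Set (Set (V → Bool)))
    (hvalid : ∀ ℓ ∈ L, ∀ μ, C μ → μ ∈ ℓ)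
    (hrules : ∀ μ ∈ {μ ∈ φ | ¬ C μ}, ∃ ℓ ∈ L, μ ∉ ℓ) :
    {μ | μ ∈ φ ∧ ∀ ℓ ∈ L, μ ∈ ℓ} = {μ ∈ φ | C μ} := by
  ext μ
  refine ⟨fun ⟨hφ, hL⟩ => ⟨hφ, ?_⟩, fun ⟨hφ, hC⟩ => ⟨hφ, fun ℓ hℓ => hvalid ℓ hℓ μ hC⟩⟩
  by_contra hC
  obtain ⟨ℓ, hℓ, hμℓ⟩ := hrules μ ⟨hφ, hC⟩
  exact hμℓ (hL ℓ hℓ)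

/-- If every formula in L is T-valid and L rules out ITTA(φ), then the
assignments satisfying φ and all of L are exactly CTTA(φ). -/
theorem stmt5 {V : Type} [Fintype V] (C : (V → Bool) → Prop)
    (φ : Set (V → Bool)) (L : Set (Set (V → Bool)))
    (hvalid : ∀ ℓ ∈ L, ∀ μ, C μ → μ ∈ ℓ)
    (hrules : ∀ μ ∈ {μ ∈ φ | ¬ C μ}, ∃ ℓ ∈ L, μ ∉ ℓ) :
    {μ | μ ∈ φ ∧ ∀ ℓ ∈ L, μ ∈ ℓ} = {μ ∈ φ | C μ} :=
  stmt5_general C φ L hvalid hrules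
end

section
/- Let A and B be disjoint finite sets of atoms, C a consistency predicate on total assignments over A ∪ B, and φ a Boolean formula over A. Define the induced consistency predicate on assignments over A by: σ is consistent iff σ has a C-consistent total extension to A ∪ B. Let L be a set of formulas over A ∪ B such that (i) every C-consistent assignment on A ∪ B satisfies every formula of L, and (ii) no total extension of any assignment in ITTA(φ) satisfies all formulas of L. Assume additionally that every consistent assignment on A has a C-consistent extension to A ∪ B. Then {σ : A → Bool | σ satisfies φ and some extension of σ to A ∪ B satisfies all formulas of L} equals CTTA(φ), the set of consistent assignments on A satisfying φ. -/
theorem stmt8_general {A B : Type}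
    (C : ((A ⊕ B) → Bool) → Prop) (φ : Set (A → Bool))
    (L : Set (Set ((A ⊕ B) → Bool)))
    -- induced consistency on assignments over A
    (Cind : (A → Bool) → Prop)
    (hvalid : ∀ ℓ ∈ L, ∀ τ, C τ → τ ∈ ℓ)
    (hrules : ∀ σ, σ ∈ φ → ¬ Cind σ →
      ∀ τ : (A ⊕ B) → Bool, (∀ a, τ (Sum.inl a) = σ a) → ∃ ℓ ∈ L, τ ∉ ℓ)
    (hext : ∀ σ, Cind σ → ∃ τ : (A ⊕ B) → Bool, (∀ a, τ (Sum.inl a) = σ a) ∧ C τ) :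
    {σ | σ ∈ φ ∧ ∃ τ : (A ⊕ B) → Bool,
        (∀ a, τ (Sum.inl a) = σ a) ∧ ∀ ℓ ∈ L, τ ∈ ℓ} =
      {σ ∈ φ | Cind σ} := by
  ext σ
  refine and_congr_right fun hφ => ⟨fun ⟨τ, hτ, hL⟩ => ?_, fun hC => ?_⟩
  · by_contra hinconsistent
    obtain ⟨ℓ, hℓ, hτℓ⟩ := hrules σ hφ hinconsistent τ hτ
    exact hτℓ (hL ℓ hℓ)
  · obtain ⟨τ, hτ, hCτ⟩ := hext σ hC
    exact ⟨τ, hτ, fun ℓ hℓ => hvalid ℓ hℓ τ hCτ⟩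

/-- Dealing with extra atoms B: if every formula in L is T-valid (on A ∪ B),
L rules out every total extension of each induced-inconsistent satisfying
assignment of φ, and every induced-consistent assignment on A has a
C-consistent extension, then the assignments on A satisfying φ and having an
extension satisfying all of L are exactly the induced-consistent satisfying
assignments of φ. -/
theorem stmt8 {A B : Type} [Fintype A] [Fintype B]
    (C : ((A ⊕ B) → Bool) → Prop) (φ : Set (A → Bool))
    (L : Set (Set ((A ⊕ B) → Bool)))
    -- induced consistency on assignments over A
    (Cind : (A → Bool) → Prop)
    (hCind : ∀ σ, Cind σ ↔ ∃ τ : (A ⊕ B) → Bool, (∀ a, τ (Sum.inl a) = σ a) ∧ C τ)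
    (hvalid : ∀ ℓ ∈ L, ∀ τ, C τ → τ ∈ ℓ)
    (hrules : ∀ σ, σ ∈ φ → ¬ Cind σ →
      ∀ τ : (A ⊕ B) → Bool, (∀ a, τ (Sum.inl a) = σ a) → ∃ ℓ ∈ L, τ ∉ ℓ)
    (hext : ∀ σ, Cind σ → ∃ τ : (A ⊕ B) → Bool, (∀ a, τ (Sum.inl a) = σ a) ∧ C τ) :
    {σ | σ ∈ φ ∧ ∃ τ : (A ⊕ B) → Bool,
        (∀ a, τ (Sum.inl a) = σ a) ∧ ∀ ℓ ∈ L, τ ∈ ℓ} =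
      {σ ∈ φ | Cind σ} :=
  stmt8_general C φ L Cind hvalid hrules hext
end

section
/- Let V be a finite set of atoms and C a consistency predicate on assignments over V. Suppose for each Boolean formula φ over V we have a set L(φ) of T-valid formulas (every C-consistent assignment satisfies them) that rules out ITTA(φ). Then for any two formulas φ, φ' over V: φ ≡_T φ' (they agree on all C-consistent assignments) if and only if sat(φ) ∩ ⋂_{ℓ∈L(φ)} sat(ℓ) = sat(φ') ∩ ⋂_{ℓ∈L(φ')} sat(ℓ). -/
/-! The T-valid formulas of `L ψ` keep every consistent model of `ψ` and, ruling out
`ITTA(ψ)`, drop every inconsistent one, so `ψ ∩ ⋂₀ L ψ` is exactly the set of consistent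
models of `ψ`. Two such sets coincide iff the formulas agree on consistent assignments. -/

namespace Set

variable {α : Type*}

theorem sep_eq_sep_iff_forall_mem_iff {p : α → Prop} {s t : Set α} :
    {x ∈ s | p x} = {x ∈ t | p x} ↔ ∀ x, p x → (x ∈ s ↔ x ∈ t) := by
  simp only [Set.ext_iff, mem_ofPred_eq]
  exact forall_congr' fun x => by by_cases hx : p x <;> simp [hx]

theorem inter_sInter_eq_sep {p : α → Prop} {s : Set α} {S : Set (Set α)}
    (hvalid : ∀ ℓ ∈ S, ∀ x, p x → x ∈ ℓ) (hrules : ∀ x ∈ s, ¬ p x → ∃ ℓ ∈ S, x ∉ ℓ) :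
    s ∩ ⋂₀ S = {x ∈ s | p x} := by
  ext x
  constructor
  · rintro ⟨hs, hS⟩
    refine ⟨hs, by_contra fun hp => ?_⟩
    obtain ⟨ℓ, hℓ, hx⟩ := hrules x hs hp
    exact hx (hS ℓ hℓ)
  · rintro ⟨hs, hp⟩
    exact ⟨hs, fun ℓ hℓ => hvalid ℓ hℓ x hp⟩

end Set

theorem stmt9_general {V : Type} (C : (V → Bool) → Prop)
    (L : Set (V → Bool) → Set (Set (V → Bool)))
    (hvalid : ∀ ψ : Set (V → Bool), ∀ ℓ ∈ L ψ, ∀ μ, C μ → μ ∈ ℓ)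
    (hrules : ∀ ψ : Set (V → Bool), ∀ μ ∈ {μ ∈ ψ | ¬ C μ}, ∃ ℓ ∈ L ψ, μ ∉ ℓ)
    (φ φ' : Set (V → Bool)) :
    (∀ μ, C μ → (μ ∈ φ ↔ μ ∈ φ')) ↔
      φ ∩ ⋂₀ (L φ) = φ' ∩ ⋂₀ (L φ') := by
  have consistent_part (ψ : Set (V → Bool)) : ψ ∩ ⋂₀ (L ψ) = {μ ∈ ψ | C μ} :=
    Set.inter_sInter_eq_sep (hvalid ψ) fun μ hψ hC => hrules ψ μ ⟨hψ, hC⟩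
  rw [consistent_part, consistent_part, Set.sep_eq_sep_iff_forall_mem_iff]

/-- If for every formula φ, L(φ) is a set of T-valid formulas ruling out
ITTA(φ), then φ ≡_T φ' iff sat(φ) ∩ ⋂ L(φ) = sat(φ') ∩ ⋂ L(φ'). -/
theorem stmt9 {V : Type} [Fintype V] (C : (V → Bool) → Prop)
    (L : Set (V → Bool) → Set (Set (V → Bool)))
    (hvalid : ∀ ψ : Set (V → Bool), ∀ ℓ ∈ L ψ, ∀ μ, C μ → μ ∈ ℓ)
    (hrules : ∀ ψ : Set (V → Bool), ∀ μ ∈ {μ ∈ ψ | ¬ C μ}, ∃ ℓ ∈ L ψ, μ ∉ ℓ)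
    (φ φ' : Set (V → Bool)) :
    (∀ μ, C μ → (μ ∈ φ ↔ μ ∈ φ')) ↔
      φ ∩ ⋂₀ (L φ) = φ' ∩ ⋂₀ (L φ') :=
  stmt9_general C L hvalid hrules φ φ'
end
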